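/- (Proposition 3.1, output operators.) For i = 1, ..., Nr, let trajectories x_k^{(i)} in R^N satisfy x_{k+1}^{(i)} = A1 x_k^{(i)} + B u_k^{(i)} with x_0^{(i)} = Q zbar_0^{(i)} for given zbar_0^{(i)} in R^n, and set zbar_k^{(i)} = Q^T x_k^{(i)} and y_k^{(i)} = C x_k^{(i)}. Let L >= 1 and suppose Nr >= n + p and the data matrix Dhat in R^{(n+p) x Nr}, whose i-th column is the concatenation of zbar_0^{(i)} and u_0^{(i)}, has full rank n + p. Then for every l = 1, ..., L, the least squares problem minimizing over Ghat in R^{s x n} and Hhat in R^{s x p} the objective sum over i = 1 to Nr of || Delta_y^{(i)}(l) - ( Ghat zbar_0^{(i)} + Hhat u_0^{(i)} ) ||_2^2, where Delta_y^{(i)}(l) = y_l^{(i)} - ( C~ zbar_l^{(i)} + sum over j = 1 to l-1 of ( G_{l-j} zbar_j^{(i)} + H_{l-j} u_j^{(i)} ) ), is uniquely solved at (Ghat, Hhat) = (G_l, H_l), with objective value 0. -/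
import Mathlib


open Matrix Finset

private lemma mulVec_sum' {m k : Type*} [Fintype m] [Fintype k] {ι : Type*}
    (t : Finset ι) (A : Matrix m k ℝ) (v : ι → k → ℝ) :
    A *ᵥ (∑ j ∈ t, v j) = ∑ j ∈ t, A *ᵥ v j := by
  ext a
  simp only [Matrix.mulVec, dotProduct, Finset.sum_apply, Finset.mul_sum]
  exact Finset.sum_comm

/-- Proposition 3.1, output operators: stagewise operator
inference uniquely recovers the intrusive non-Markovian output operators
(G_l, H_l) with zero objective value, for each lag l = 1, ..., L. -/
theorem stmt_13 (N n p s Nr L : ℕ) (hN : 0 < N) (hn : 0 < n) (hp : 0 < p)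
    (hs : 0 < s) (hNr : 0 < Nr) (hnN : n < N) (hL : 1 ≤ L)
    (Q : Matrix (Fin N) (Fin n) ℝ) (Qperp : Matrix (Fin N) (Fin (N - n)) ℝ)
    (hQ : Qᵀ * Q = 1) (hQperp : Qperpᵀ * Qperp = 1) (hQQperp : Qᵀ * Qperp = 0)
    (hsum : Q * Qᵀ + Qperp * Qperpᵀ = 1)
    (A1 : Matrix (Fin N) (Fin N) ℝ) (B : Matrix (Fin N) (Fin p) ℝ)
    (C : Matrix (Fin s) (Fin N) ℝ)
    (u : Fin Nr → ℕ → Fin p → ℝ)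
    (Ct : Matrix (Fin s) (Fin n) ℝ) (hCt : Ct = C * Q)
    (G : ℕ → Matrix (Fin s) (Fin n) ℝ) (H : ℕ → Matrix (Fin s) (Fin p) ℝ)
    (hG : ∀ j, 1 ≤ j → G j =
      C * Qperp * ((Qperpᵀ * A1 * Qperp) ^ (j - 1)) * (Qperpᵀ * A1 * Q))
    (hH : ∀ j, 1 ≤ j → H j =
      C * Qperp * ((Qperpᵀ * A1 * Qperp) ^ (j - 1)) * (Qperpᵀ * B))
    (zbar0 : Fin Nr → Fin n → ℝ)
    (x : Fin Nr → ℕ → Fin N → ℝ)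
    (hx0 : ∀ i, x i 0 = Q *ᵥ zbar0 i)
    (hx : ∀ i k, x i (k + 1) = A1 *ᵥ x i k + B *ᵥ u i k)
    (zbar : Fin Nr → ℕ → Fin n → ℝ)
    (hzbar : ∀ i k, zbar i k = Qᵀ *ᵥ x i k)
    (y : Fin Nr → ℕ → Fin s → ℝ)
    (hy : ∀ i k, y i k = C *ᵥ x i k)
    (Dhat : Matrix (Fin n ⊕ Fin p) (Fin Nr) ℝ)
    (hDhat1 : ∀ (a : Fin n) (i : Fin Nr), Dhat (Sum.inl a) i = zbar0 i a)
    (hDhat2 : ∀ (b : Fin p) (i : Fin Nr), Dhat (Sum.inr b) i = u i 0 b)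
    (hNrnp : n + p ≤ Nr) (hrank : Dhat.rank = n + p)
    (Δ : Fin Nr → ℕ → Fin s → ℝ)
    (hΔ : ∀ i l, Δ i l = y i l - (Ct *ᵥ zbar i l
      + ∑ j ∈ Finset.Ico 1 l, (G (l - j) *ᵥ zbar i j + H (l - j) *ᵥ u i j))) :
    ∀ l, 1 ≤ l → l ≤ L →
      (∑ i, ∑ a, ((Δ i l - (G l *ᵥ zbar0 i + H l *ᵥ u i 0)) a) ^ 2) = 0 ∧
      ∀ (Ghat : Matrix (Fin s) (Fin n) ℝ) (Hhat : Matrix (Fin s) (Fin p) ℝ),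
        (∑ i, ∑ a, ((Δ i l - (Ghat *ᵥ zbar0 i + Hhat *ᵥ u i 0)) a) ^ 2)
          ≤ (∑ i, ∑ a, ((Δ i l - (G l *ᵥ zbar0 i + H l *ᵥ u i 0)) a) ^ 2) →
        Ghat = G l ∧ Hhat = H l := by
  have hQpQ : Qperpᵀ * Q = (0 : Matrix (Fin (N - n)) (Fin n) ℝ) := by
    have := congrArg Matrix.transpose hQQperp
    simpa using this
  set S := Qperpᵀ * A1 * Qperp with hS
  set R := Qperpᵀ * A1 * Q with hR
  set T := Qperpᵀ * B with hT
  set w : Fin Nr → ℕ → Fin (N - n) → ℝ := fun i k => Qperpᵀ *ᵥ x i k with hw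
  have hw0 : ∀ i, w i 0 = 0 := by
    intro i
    rw [hw]
    simp only [hx0, mulVec_mulVec, hQpQ, zero_mulVec]
  have hxdec : ∀ i k, x i k = Q *ᵥ zbar i k + Qperp *ᵥ w i k := by
    intro i k
    have h1 : (Q * Qᵀ + Qperp * Qperpᵀ) *ᵥ x i k = x i k := by
      rw [hsum, one_mulVec]
    calc x i k = (Q * Qᵀ + Qperp * Qperpᵀ) *ᵥ x i k := h1.symm
      _ = Q *ᵥ zbar i k + Qperp *ᵥ w i k := by
          rw [add_mulVec, hzbar, hw, ← mulVec_mulVec, ← mulVec_mulVec]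
  have hwl : ∀ i l, w i l =
      ∑ j ∈ Finset.range l, (S ^ (l - 1 - j)) *ᵥ (R *ᵥ zbar i j + T *ᵥ u i j) := by
    intro i l
    induction l with
    | zero => simp [hw0]
    | succ l ih =>
      have hstep : w i (l + 1) = S *ᵥ w i l + (R *ᵥ zbar i l + T *ᵥ u i l) := by
        have h1 : w i (l + 1)
            = Qperpᵀ *ᵥ (A1 *ᵥ (Q *ᵥ zbar i l + Qperp *ᵥ w i l) + B *ᵥ u i l) := by
          rw [hw]
          simp only
          rw [hx i l, ← hxdec i l]
        rw [h1]
        simp only [mulVec_add, mulVec_mulVec, ← Matrix.mul_assoc]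
        rw [hS, hR, hT]
        abel
      rw [hstep, ih, mulVec_sum', Finset.sum_range_succ]
      congr 1
      · apply Finset.sum_congr rfl
        intro j hj
        have hj' : j < l := Finset.mem_range.mp hj
        rw [mulVec_mulVec, ← pow_succ']
        have he : l - 1 - j + 1 = l + 1 - 1 - j := by omega
        rw [he]
      · have : l + 1 - 1 - l = 0 := by omega
        rw [this, pow_zero, one_mulVec]
  have hz0 : ∀ i, zbar i 0 = zbar0 i := by
    intro i
    rw [hzbar, hx0, mulVec_mulVec, hQ, one_mulVec]
  have key : ∀ i l, 1 ≤ l → Δ i l = G l *ᵥ zbar0 i + H l *ᵥ u i 0 := by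
    intro i l hl
    have hyl : y i l = Ct *ᵥ zbar i l + (C * Qperp) *ᵥ w i l := by
      rw [hy, hxdec i l, mulVec_add, hCt, mulVec_mulVec, mulVec_mulVec]
    have hCw : (C * Qperp) *ᵥ w i l =
        ∑ j ∈ Finset.range l, (G (l - j) *ᵥ zbar i j + H (l - j) *ᵥ u i j) := by
      rw [hwl, mulVec_sum']
      apply Finset.sum_congr rfl
      intro j hj
      have hj' : j < l := Finset.mem_range.mp hj
      have hsub : l - j - 1 = l - 1 - j := by omega
      rw [hG (l - j) (by omega), hH (l - j) (by omega), hsub]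
      simp only [mulVec_add, mulVec_mulVec, Matrix.mul_assoc]
    have hsplit : ∑ j ∈ Finset.range l, (G (l - j) *ᵥ zbar i j + H (l - j) *ᵥ u i j)
        = (G l *ᵥ zbar0 i + H l *ᵥ u i 0)
          + ∑ j ∈ Finset.Ico 1 l, (G (l - j) *ᵥ zbar i j + H (l - j) *ᵥ u i j) := by
      rw [Finset.range_eq_Ico, Finset.sum_eq_sum_Ico_succ_bot hl]
      simp [hz0]
    rw [hΔ, hyl, hCw, hsplit]
    abel
  intro l hl hlL
  have hzero : ∀ i, Δ i l - (G l *ᵥ zbar0 i + H l *ᵥ u i 0) = 0 := by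
    intro i
    rw [key i l hl]
    simp
  have hobj : (∑ i, ∑ a, ((Δ i l - (G l *ᵥ zbar0 i + H l *ᵥ u i 0)) a) ^ 2) = 0 := by
    apply Finset.sum_eq_zero
    intro i _
    apply Finset.sum_eq_zero
    intro a _
    rw [hzero i]
    simp
  refine ⟨hobj, ?_⟩
  intro Ghat Hhat hle
  rw [hobj] at hle
  have hge : (0:ℝ) ≤ ∑ i, ∑ a, ((Δ i l - (Ghat *ᵥ zbar0 i + Hhat *ᵥ u i 0)) a) ^ 2 := by
    positivity
  have heq0 : (∑ i, ∑ a, ((Δ i l - (Ghat *ᵥ zbar0 i + Hhat *ᵥ u i 0)) a) ^ 2) = 0 :=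
    le_antisymm hle hge
  have hterm : ∀ i a, (Δ i l - (Ghat *ᵥ zbar0 i + Hhat *ᵥ u i 0)) a = 0 := by
    intro i a
    have h1 : ∀ i ∈ Finset.univ (α := Fin Nr),
        (∑ a, ((Δ i l - (Ghat *ᵥ zbar0 i + Hhat *ᵥ u i 0)) a) ^ 2) = 0 := by
      intro i _
      have := (Finset.sum_eq_zero_iff_of_nonneg (fun i _ => by positivity)).mp heq0
      exact this i (Finset.mem_univ i)
    have h2 := (Finset.sum_eq_zero_iff_of_nonneg (fun a _ => by positivity)).mp
      (h1 i (Finset.mem_univ i)) a (Finset.mem_univ a)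
    exact pow_eq_zero_iff two_ne_zero |>.mp h2
  have hmatch : ∀ i a, (Ghat *ᵥ zbar0 i + Hhat *ᵥ u i 0) a
      = (G l *ᵥ zbar0 i + H l *ᵥ u i 0) a := by
    intro i a
    have h1 := hterm i a
    have h2 := congrFun (hzero i) a
    simp only [Pi.sub_apply, Pi.zero_apply, sub_eq_zero] at h1 h2
    rw [← h1, ← h2]
  have hli : LinearIndependent ℝ (fun c => Dhat c) := by
    rw [linearIndependent_iff_card_eq_finrank_span]
    have : Set.finrank ℝ (Set.range Dhat) = Dhat.rank := by
      rw [Dhat.rank_eq_finrank_span_row]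
      rfl
    rw [this, hrank]
    simp
  have hinj : Function.Injective Dhat.vecMul := Matrix.vecMul_injective_iff.mpr hli
  have hrowzero : ∀ a : Fin s,
      (Sum.elim (fun x0 => Ghat a x0 - G l a x0) (fun x0 => Hhat a x0 - H l a x0) :
        Fin n ⊕ Fin p → ℝ) = 0 := by
    intro a
    apply hinj
    simp only [Matrix.zero_vecMul]
    funext i
    have h := hmatch i a
    simp only [Pi.add_apply, Matrix.mulVec, dotProduct] at h
    simp only [Matrix.vecMul, dotProduct, Fintype.sum_sum_type, Sum.elim_inl, Sum.elim_inr,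
      hDhat1, hDhat2, Pi.zero_apply, sub_mul]
    rw [Finset.sum_sub_distrib, Finset.sum_sub_distrib]
    linarith
  constructor
  · ext a x0
    have := congrFun (hrowzero a) (Sum.inl x0)
    simpa [sub_eq_zero] using this
  · ext a x0
    have := congrFun (hrowzero a) (Sum.inr x0)
    simpa [sub_eq_zero] using this
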